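/- arXiv:0709.0454 — 3 statements merged into one kernel-verified Lean document; each statement's English description precedes it below -/
import Mathlib

section
/- Let A, B, C be three non-collinear points in the Euclidean plane, with incenter I and excenters E_A, E_B, E_C. Then the three circles through the triples (I, E_A, E_B), (I, E_B, E_C), and (I, E_A, E_C) all have the same radius; equivalently, the circumradii of these three triples of points are equal. -/
/-! The internal and external bisectors at a vertex are perpendicular; the incenter `I` and the
excenter `E_A` lie on the internal bisector at `A`, while `E_B` and `E_C` lie on the external one.
Hence `I` is the orthocenter of the excentral triangle `E_A E_B E_C` (which is non-degenerate, its
sides passing through `A`, `B`, `C`). In an orthocentric system `{H, X, Y, Z}` the circle through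
`H, X, Y` is the reflection of the circumcircle of `XYZ` in the line `XY`, so all its triangles have
the same circumradius. -/

noncomputable def incenterPt (A B C : EuclideanSpace ℝ (Fin 2)) : EuclideanSpace ℝ (Fin 2) :=
  (dist B C + dist C A + dist A B)⁻¹ •
    (dist B C • A + dist C A • B + dist A B • C)

/-- The excenter of the triangle `A B C` opposite the first vertex `A`. -/
noncomputable def excenterPt (A B C : EuclideanSpace ℝ (Fin 2)) : EuclideanSpace ℝ (Fin 2) :=
  (-dist B C + dist C A + dist A B)⁻¹ •
    ((-dist B C) • A + dist C A • B + dist A B • C)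

open EuclideanGeometry Affine AffineSubspace
open scoped RealInnerProductSpace

section

variable {V P : Type*} [NormedAddCommGroup V] [InnerProductSpace ℝ V] [MetricSpace P]
  [NormedAddTorsor V P]

lemma injective_triple_iff_ne {α : Type*} {x y z : α} :
    Function.Injective ![x, y, z] ↔ x ≠ y ∧ x ≠ z ∧ y ≠ z := by
  refine ⟨fun h ↦ ⟨h.ne (show (0 : Fin 3) ≠ 1 by decide),
    h.ne (show (0 : Fin 3) ≠ 2 by decide), h.ne (show (1 : Fin 3) ≠ 2 by decide)⟩,
    fun h a b h' ↦ ?_⟩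
  fin_cases a <;> fin_cases b <;> simp_all [eq_comm]

lemma range_triple {α : Type*} (x y z : α) : Set.range ![x, y, z] = {x, y, z} := by
  rw [Matrix.range_cons, Matrix.range_cons, Matrix.range_cons_empty, Set.singleton_union,
    Set.singleton_union]

lemma mem_affineSpan_pair_of_add_smul_eq {A B C : V} {x y : ℝ} (hxy : x + y ≠ 0)
    (h : (x + y) • A = x • B + y • C) : A ∈ line[ℝ, B, C] := by
  have hA : A = AffineMap.lineMap B C (y / (x + y)) := by
    rw [AffineMap.lineMap_apply_module, ← smul_right_injective V hxy |>.eq_iff, h]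
    match_scalars <;> field_simp
    ring
  exact hA ▸ AffineMap.lineMap_mem_affineSpan_pair _ _ _

lemma collinear_of_collinear_of_mem_affineSpan_pair {A B C X Y Z : P}
    (hA : A ∈ line[ℝ, Y, Z]) (hB : B ∈ line[ℝ, Z, X]) (hC : C ∈ line[ℝ, X, Y])
    (h : Collinear ℝ {X, Y, Z}) : Collinear ℝ {A, B, C} := by
  have hle : affineSpan ℝ {A, B, C} ≤ affineSpan ℝ {X, Y, Z} := by
    refine affineSpan_le.2 (Set.insert_subset ?_ (Set.insert_subset ?_ ?_))
    · exact affineSpan_mono ℝ (by simp) hA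
    · exact affineSpan_mono ℝ (by simp [Set.insert_subset_iff]) hB
    · exact Set.singleton_subset_iff.2 (affineSpan_mono ℝ (by simp [Set.insert_subset_iff]) hC)
  have hdir := direction_le hle
  rw [direction_affineSpan, direction_affineSpan] at hdir
  exact (Submodule.rank_mono hdir).trans h

lemma not_collinear_rotate {A B C : P} (h : ¬Collinear ℝ {A, B, C}) :
    ¬Collinear ℝ {B, C, A} := by
  rwa [Set.pair_comm, Set.insert_comm]

theorem Affine.Triangle.mem_altitude_iff (t : Triangle ℝ P) {i₁ i₂ i₃ : Fin 3}
    (h₁₂ : i₁ ≠ i₂) (h₁₃ : i₁ ≠ i₃) (h₂₃ : i₂ ≠ i₃) {p : P} :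
    p ∈ t.altitude i₁ ↔
      p ∈ affineSpan ℝ (Set.range t.points) ∧
        ⟪t.points i₂ -ᵥ t.points i₃, p -ᵥ t.points i₁⟫ = 0 := by
  have hc : ({i₂, i₃}ᶜ : Finset (Fin 3)) = {i₁} := by decide +revert
  rw [t.altitude_eq_mongePlane h₁₂ h₁₃ h₂₃, Simplex.mongePlane_def, hc,
    Finset.centroid_singleton, mem_inf_iff, mem_mk',
    Submodule.mem_orthogonal_singleton_iff_inner_right, and_comm]

theorem EuclideanGeometry.OrthocentricSystem.exists_forall_dist_eq {s : Set P}
    (ho : OrthocentricSystem s) :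
    ∃ r : ℝ, ∀ p : Fin 3 → P, Set.range p ⊆ s → Function.Injective p →
      ∃ O : P, ∀ i, dist (p i) O = r := by
  obtain ⟨r, hr⟩ := ho.exists_circumradius_eq
  refine ⟨r, fun p hps hpi ↦ ?_⟩
  let t : Triangle ℝ P := ⟨p, ho.affineIndependent hps hpi⟩
  exact ⟨t.circumcenter, fun i ↦ (t.dist_circumcenter_eq_circumradius i).trans (hr t hps)⟩

theorem affineIndependent_and_exists_dist_eq_of_eq_orthocenter {X Y Z H : P}
    (hXYZ : AffineIndependent ℝ ![X, Y, Z]) (hH : H = Triangle.orthocenter ⟨_, hXYZ⟩)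
    (hX : H ≠ X) (hY : H ≠ Y) (hZ : H ≠ Z) :
    AffineIndependent ℝ ![H, X, Y] ∧ AffineIndependent ℝ ![H, Y, Z] ∧
      AffineIndependent ℝ ![H, X, Z] ∧
      ∃ r : ℝ, (∃ O : P, dist H O = r ∧ dist X O = r ∧ dist Y O = r) ∧
        (∃ O : P, dist H O = r ∧ dist Y O = r ∧ dist Z O = r) ∧
        (∃ O : P, dist H O = r ∧ dist X O = r ∧ dist Z O = r) := by
  have ho : OrthocentricSystem ({H, X, Y, Z} : Set P) := by
    refine ⟨⟨_, hXYZ⟩, ?_, ?_⟩ <;> dsimp only <;> rw [← hH, range_triple]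
    simp [hX, hY, hZ]
  obtain ⟨r, hr⟩ := ho.exists_forall_dist_eq
  have hcircle : ∀ U W : P, U ∈ ({X, Y, Z} : Set P) → W ∈ ({X, Y, Z} : Set P) →
      H ≠ U → H ≠ W → U ≠ W →
      AffineIndependent ℝ ![H, U, W] ∧
        ∃ O : P, dist H O = r ∧ dist U O = r ∧ dist W O = r := by
    intro U W hU hW hHU hHW hUW
    have hps : Set.range ![H, U, W] ⊆ {H, X, Y, Z} := by
      rw [range_triple]
      exact Set.insert_subset_insert (Set.insert_subset hU (Set.singleton_subset_iff.2 hW))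
    have hpi := injective_triple_iff_ne.2 ⟨hHU, hHW, hUW⟩
    obtain ⟨O, hO⟩ := hr _ hps hpi
    exact ⟨ho.affineIndependent hps hpi, O, hO 0, hO 1, hO 2⟩
  obtain ⟨hXY, hXZ, hYZ⟩ := injective_triple_iff_ne.1 hXYZ.injective
  obtain ⟨hHXY, hcXY⟩ := hcircle X Y (by simp) (by simp) hX hY hXY
  obtain ⟨hHYZ, hcYZ⟩ := hcircle Y Z (by simp) (by simp) hY hZ hYZ
  obtain ⟨hHXZ, hcXZ⟩ := hcircle X Z (by simp) (by simp) hX hZ hXZ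
  exact ⟨hHXY, hHYZ, hHXZ, r, hcXY, hcYZ, hcXZ⟩

end

variable {A B C : EuclideanSpace ℝ (Fin 2)}

lemma incenterPt_rotate : incenterPt B C A = incenterPt A B C := by
  unfold incenterPt
  congr 1 <;> [ring; abel]

lemma neg_dist_add_dist_add_dist_pos (h : ¬Collinear ℝ {A, B, C}) :
    0 < -dist B C + dist C A + dist A B := by
  have hlt : dist B C < dist B A + dist A C := dist_lt_dist_add_dist_iff.2 fun hw ↦
    h (by simpa [Set.insert_comm] using hw.collinear)
  rw [dist_comm B A, dist_comm A C] at hlt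
  linarith

lemma smul_incenterPt (h : dist B C + dist C A + dist A B ≠ 0) :
    (dist B C + dist C A + dist A B) • incenterPt A B C =
      dist B C • A + dist C A • B + dist A B • C :=
  smul_inv_smul₀ h _

lemma smul_excenterPt (h : -dist B C + dist C A + dist A B ≠ 0) :
    (-dist B C + dist C A + dist A B) • excenterPt A B C =
      (-dist B C) • A + dist C A • B + dist A B • C :=
  smul_inv_smul₀ h _

lemma incenterPt_sub_excenterPt (h : ¬Collinear ℝ {A, B, C}) :
    incenterPt A B C - excenterPt A B C =
      ((dist B C + dist C A + dist A B)⁻¹ - (-dist B C + dist C A + dist A B)⁻¹) •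
        (dist C A • (B - A) + dist A B • (C - A)) := by
  have hA := neg_dist_add_dist_add_dist_pos h
  have hI : 0 < dist B C + dist C A + dist A B := by linarith [dist_nonneg (x := B) (y := C)]
  unfold incenterPt excenterPt
  match_scalars <;> field_simp
  ring

lemma excenterPt_sub_excenterPt (h : ¬Collinear ℝ {A, B, C}) :
    excenterPt B C A - excenterPt C A B =
      (-(-dist C A + dist A B + dist B C)⁻¹ - (-dist A B + dist B C + dist C A)⁻¹) •
        (dist C A • (B - A) - dist A B • (C - A)) := by
  have hB := neg_dist_add_dist_add_dist_pos (not_collinear_rotate h)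
  have hC := neg_dist_add_dist_add_dist_pos (not_collinear_rotate (not_collinear_rotate h))
  unfold excenterPt
  match_scalars <;> field_simp <;> ring

lemma inner_excenterPt_sub_excenterPt_incenterPt_sub_excenterPt (h : ¬Collinear ℝ {A, B, C}) :
    ⟪excenterPt B C A - excenterPt C A B, incenterPt A B C - excenterPt A B C⟫ = 0 := by
  -- the directions of the external and the internal bisector at `A`
  have hbisectors : ⟪dist C A • (B - A) - dist A B • (C - A),
      dist C A • (B - A) + dist A B • (C - A)⟫ = 0 := by
    rw [real_inner_comm, real_inner_add_sub_eq_zero_iff, norm_smul, norm_smul,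
      Real.norm_of_nonneg dist_nonneg, Real.norm_of_nonneg dist_nonneg, ← dist_eq_norm,
      ← dist_eq_norm, dist_comm B A, mul_comm]
  rw [excenterPt_sub_excenterPt h, incenterPt_sub_excenterPt h, inner_smul_left,
    inner_smul_right, hbisectors, mul_zero, mul_zero]

lemma mem_affineSpan_excenterPt_excenterPt (h : ¬Collinear ℝ {A, B, C}) :
    A ∈ line[ℝ, excenterPt B C A, excenterPt C A B] := by
  have hB := neg_dist_add_dist_add_dist_pos (not_collinear_rotate h)
  have hC := neg_dist_add_dist_add_dist_pos (not_collinear_rotate (not_collinear_rotate h))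
  refine mem_affineSpan_pair_of_add_smul_eq (add_pos hB hC).ne' ?_
  rw [smul_excenterPt hB.ne', smul_excenterPt hC.ne']
  module

lemma incenterPt_ne_excenterPt (h : ¬Collinear ℝ {A, B, C}) :
    incenterPt A B C ≠ excenterPt A B C := by
  have hA := neg_dist_add_dist_add_dist_pos h
  have hB := neg_dist_add_dist_add_dist_pos (not_collinear_rotate h)
  have hC := neg_dist_add_dist_add_dist_pos (not_collinear_rotate (not_collinear_rotate h))
  have hI : 0 < dist B C + dist C A + dist A B := by linarith [dist_nonneg (x := B) (y := C)]
  intro hIE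
  have hsI := smul_incenterPt hI.ne'
  have hsE := smul_excenterPt hA.ne'
  rw [← hIE] at hsE
  -- the two barycentric equations together force `I = A`, and then `A` would lie on `BC`
  have hIA : incenterPt A B C = A := by
    refine smul_right_injective _ (show 2 * dist B C ≠ 0 by linarith) ?_
    linear_combination (norm := module) hsI - hsE
  rw [hIA] at hsI
  refine h (collinear_insert_of_mem_affineSpan_pair
    (mem_affineSpan_pair_of_add_smul_eq (x := dist C A) (y := dist A B) (by linarith) ?_))
  linear_combination (norm := module) hsI

lemma affineIndependent_excenterPt (h : ¬Collinear ℝ {A, B, C}) :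
    AffineIndependent ℝ ![excenterPt A B C, excenterPt B C A, excenterPt C A B] := by
  have hBCA := not_collinear_rotate h
  refine affineIndependent_iff_not_collinear_set.2 fun hcol ↦ h ?_
  exact collinear_of_collinear_of_mem_affineSpan_pair (mem_affineSpan_excenterPt_excenterPt h)
    (mem_affineSpan_excenterPt_excenterPt hBCA)
    (mem_affineSpan_excenterPt_excenterPt (not_collinear_rotate hBCA)) hcol

lemma incenterPt_eq_orthocenter (h : ¬Collinear ℝ {A, B, C}) :
    incenterPt A B C = Triangle.orthocenter ⟨_, affineIndependent_excenterPt h⟩ := by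
  set t : Triangle ℝ (EuclideanSpace ℝ (Fin 2)) := ⟨_, affineIndependent_excenterPt h⟩
  have hspan := t.span_eq_top finrank_euclideanSpace_fin
  have h01 : (0 : Fin 3) ≠ 1 := by decide
  have h02 : (0 : Fin 3) ≠ 2 := by decide
  have h12 : (1 : Fin 3) ≠ 2 := by decide
  refine t.eq_orthocenter_of_forall_mem_altitude h01 ?_ ?_
  · rw [t.mem_altitude_iff h01 h02 h12]
    exact ⟨by simp [hspan], inner_excenterPt_sub_excenterPt_incenterPt_sub_excenterPt h⟩
  · rw [t.mem_altitude_iff h12 h01.symm h02.symm, ← incenterPt_rotate]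
    exact ⟨by simp [hspan],
      inner_excenterPt_sub_excenterPt_incenterPt_sub_excenterPt (not_collinear_rotate h)⟩

/-- The three circles through the triples `(I, E_A, E_B)`, `(I, E_B, E_C)` and
`(I, E_A, E_C)` all have the same radius: each of the three triples is
non-collinear and they lie on circles of one common radius `r`. -/
theorem equal_circumradii (A B C : EuclideanSpace ℝ (Fin 2))
    (h : AffineIndependent ℝ ![A, B, C]) :
    AffineIndependent ℝ ![incenterPt A B C, excenterPt A B C, excenterPt B C A] ∧
    AffineIndependent ℝ ![incenterPt A B C, excenterPt B C A, excenterPt C A B] ∧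
    AffineIndependent ℝ ![incenterPt A B C, excenterPt A B C, excenterPt C A B] ∧
    ∃ r : ℝ,
      (∃ O : EuclideanSpace ℝ (Fin 2), dist (incenterPt A B C) O = r ∧
        dist (excenterPt A B C) O = r ∧ dist (excenterPt B C A) O = r) ∧
      (∃ O : EuclideanSpace ℝ (Fin 2), dist (incenterPt A B C) O = r ∧
        dist (excenterPt B C A) O = r ∧ dist (excenterPt C A B) O = r) ∧
      (∃ O : EuclideanSpace ℝ (Fin 2), dist (incenterPt A B C) O = r ∧
        dist (excenterPt A B C) O = r ∧ dist (excenterPt C A B) O = r) := by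
  have hABC : ¬Collinear ℝ {A, B, C} := affineIndependent_iff_not_collinear_set.1 h
  have hBCA := not_collinear_rotate hABC
  refine affineIndependent_and_exists_dist_eq_of_eq_orthocenter (affineIndependent_excenterPt hABC)
    (incenterPt_eq_orthocenter hABC) (incenterPt_ne_excenterPt hABC) ?_ ?_
  · simpa [incenterPt_rotate] using incenterPt_ne_excenterPt hBCA
  · simpa [incenterPt_rotate] using incenterPt_ne_excenterPt (not_collinear_rotate hBCA)
end

section
/- Let A, B, C be three non-collinear points in the Euclidean plane, with excenters E_A and E_B. Then the unsigned angles ∠ E_A A E_B and ∠ E_A B E_B are both right angles (π/2); equivalently, the vertices A and B both lie on the circle having the segment from E_A to E_B as a diameter. -/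
/-!
Relative to a vertex, say `A`, the excenter `E_A` lies in the direction `b • (B - A) + c • (C - A)`
and `E_B` in the direction `c • (C - A) - b • (B - A)` (the inner and outer bisectors at `A`).
These are the sum and difference of two vectors of the same length `b * c`, hence orthogonal.
Since `E_A` is symmetric in `B` and `C`, the right angle at `B` is the same statement for the
triangle `B A C`, and Thales' theorem turns both right angles into the circle statement.
-/

open EuclideanGeometry

lemma dist_lt_dist_add_dist_of_not_collinear {V P : Type*} [NormedAddCommGroup V]
    [NormedSpace ℝ V] [StrictConvexSpace ℝ V] [MetricSpace P] [NormedAddTorsor V P] {A B C : P}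
    (h : ¬ Collinear ℝ {A, B, C}) : dist B C < dist B A + dist A C :=
  dist_lt_dist_add_dist_iff.mpr fun hw => h (by simpa only [Set.insert_comm] using hw.collinear)

section

variable {A B C : EuclideanSpace ℝ (Fin 2)}

lemma excenterPt_denom_pos (h : ¬ Collinear ℝ {A, B, C}) :
    0 < -dist B C + dist C A + dist A B := by
  linarith [dist_lt_dist_add_dist_of_not_collinear h, dist_comm A B, dist_comm A C]

lemma excenterPt_comm (A B C : EuclideanSpace ℝ (Fin 2)) :
    excenterPt A C B = excenterPt A B C := by
  unfold excenterPt
  rw [dist_comm C B, dist_comm B A, dist_comm A C]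
  congr 1
  · ring
  · abel

lemma excenterPt_sub (P : EuclideanSpace ℝ (Fin 2)) (h : ¬ Collinear ℝ {A, B, C}) :
    excenterPt A B C - P = (-dist B C + dist C A + dist A B)⁻¹ •
      ((-dist B C) • (A - P) + dist C A • (B - P) + dist A B • (C - P)) := by
  have hs := (excenterPt_denom_pos h).ne'
  unfold excenterPt
  match_scalars <;> field_simp
  ring

lemma inner_excenterPt_sub_excenterPt_sub (h : ¬ Collinear ℝ {A, B, C}) :
    inner ℝ (excenterPt A B C - A) (excenterPt B C A - A) = 0 := by
  have h' : ¬ Collinear ℝ {B, C, A} := by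
    rwa [Set.insert_comm B C, Set.pair_comm B A, Set.insert_comm C A, Set.pair_comm C B]
  have hnorm : ‖dist A B • (C - A)‖ = ‖dist C A • (B - A)‖ := by
    simp only [norm_smul, Real.norm_eq_abs, abs_dist, ← dist_eq_norm, dist_comm, mul_comm]
  rw [excenterPt_sub A h, excenterPt_sub A h']
  simp only [sub_self, smul_zero, zero_add, add_zero, real_inner_smul_left, real_inner_smul_right]
  rw [neg_smul, neg_add_eq_sub (dist C A • (B - A)), add_comm (dist C A • (B - A)),
    (real_inner_add_sub_eq_zero_iff _ _).mpr hnorm]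
  ring

lemma angle_excenterPt_excenterPt_eq_pi_div_two (h : ¬ Collinear ℝ {A, B, C}) :
    ∠ (excenterPt A B C) A (excenterPt B C A) = Real.pi / 2 :=
  (InnerProductGeometry.inner_eq_zero_iff_angle_eq_pi_div_two _ _).mp
    (inner_excenterPt_sub_excenterPt_sub h)

end

/-- The angles `∠ E_A A E_B` and `∠ E_A B E_B` are right angles; equivalently, `A` and
`B` lie on the circle with the segment from `E_A` to `E_B` as a diameter. -/
theorem excenter_angles_right (A B C : EuclideanSpace ℝ (Fin 2))
    (h : AffineIndependent ℝ ![A, B, C]) :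
    ∠ (excenterPt A B C) A (excenterPt B C A) = Real.pi / 2 ∧
    ∠ (excenterPt A B C) B (excenterPt B C A) = Real.pi / 2 ∧
    dist A (midpoint ℝ (excenterPt A B C) (excenterPt B C A)) =
      dist (excenterPt A B C) (excenterPt B C A) / 2 ∧
    dist B (midpoint ℝ (excenterPt A B C) (excenterPt B C A)) =
      dist (excenterPt A B C) (excenterPt B C A) / 2 := by
  rw [affineIndependent_iff_not_collinear_set] at h
  have hA := angle_excenterPt_excenterPt_eq_pi_div_two h
  have hB : ∠ (excenterPt A B C) B (excenterPt B C A) = Real.pi / 2 := by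
    rw [angle_comm, ← excenterPt_comm B, ← excenterPt_comm A]
    exact angle_excenterPt_excenterPt_eq_pi_div_two (by rwa [Set.insert_comm])
  exact ⟨hA, hB, mem_sphere.mp (Sphere.angle_eq_pi_div_two_iff_mem_sphere_ofDiameter.mp hA),
    mem_sphere.mp (Sphere.angle_eq_pi_div_two_iff_mem_sphere_ofDiameter.mp hB)⟩
end

section
/- Let A, B, C be three non-collinear points in the Euclidean plane, with incenter I and excenters E_A, E_B, E_C. Then dist(E_A,I)/dist(E_A,E_C) = dist(E_A,B)/dist(E_A,A) and dist(E_B,E_C)/dist(E_B,I) = dist(E_B,B)/dist(E_B,A). -/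
section Barycentric

variable {E : Type*} [NormedAddCommGroup E] [InnerProductSpace ℝ E]

theorem dist_lt_dist_add_dist_of_not_collinear_s11 {A B C : E}
    (h : ¬ Collinear ℝ ({A, B, C} : Set E)) : dist B C < dist C A + dist A B := by
  have hBAC : ¬ Wbtw ℝ B A C := fun hw => h (by simpa [Set.insert_comm] using hw.collinear)
  simpa [dist_comm, add_comm] using dist_lt_dist_add_dist_iff.mpr hBAC

theorem norm_smul_add_smul_add_smul_sq (A B C : E) {u v w : ℝ} (h : u + v + w = 0) :
    ‖u • A + v • B + w • C‖ ^ 2 =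
      -(dist B C ^ 2 * (v * w) + dist C A ^ 2 * (w * u) + dist A B ^ 2 * (u * v)) := by
  have hvec : u • A + v • B + w • C = v • (B - A) + w • (C - A) := by
    rw [show u = -v - w by linear_combination h]; module
  have hpolar : dist B C ^ 2 = dist A B ^ 2 + dist C A ^ 2 - 2 * inner ℝ (B - A) (C - A) := by
    rw [dist_eq_norm, dist_comm A, dist_eq_norm, dist_eq_norm,
      show B - C = (B - A) - (C - A) by abel, norm_sub_sq_real]
    ring
  rw [hvec, norm_add_sq_real, real_inner_smul_left, real_inner_smul_right, norm_smul, norm_smul,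
    mul_pow, mul_pow, Real.norm_eq_abs, Real.norm_eq_abs, sq_abs, sq_abs, ← dist_eq_norm,
    ← dist_eq_norm, dist_comm B, hpolar, show u = -v - w by linear_combination h]
  ring

theorem dist_smul_add_smul_add_smul_sq (A B C : E) {x y z x' y' z' : ℝ}
    (h : x + y + z = 1) (h' : x' + y' + z' = 1) :
    dist (x • A + y • B + z • C) (x' • A + y' • B + z' • C) ^ 2 =
      -(dist B C ^ 2 * ((y - y') * (z - z')) + dist C A ^ 2 * ((z - z') * (x - x')) +
        dist A B ^ 2 * ((x - x') * (y - y'))) := by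
  rw [dist_eq_norm, show x • A + y • B + z • C - (x' • A + y' • B + z' • C) =
    (x - x') • A + (y - y') • B + (z - z') • C by module]
  exact norm_smul_add_smul_add_smul_sq A B C (by linear_combination h - h')

end Barycentric

section Triangle

variable (A B C : EuclideanSpace ℝ (Fin 2))

theorem incenterPt_eq :
    incenterPt A B C =
      (dist B C / (dist B C + dist C A + dist A B)) • A +
        (dist C A / (dist B C + dist C A + dist A B)) • B +
        (dist A B / (dist B C + dist C A + dist A B)) • C := by
  simp only [incenterPt, smul_add, smul_smul, div_eq_inv_mul]

theorem excenterPt_eq :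
    excenterPt A B C =
      (-dist B C / (-dist B C + dist C A + dist A B)) • A +
        (dist C A / (-dist B C + dist C A + dist A B)) • B +
        (dist A B / (-dist B C + dist C A + dist A B)) • C := by
  simp only [excenterPt, smul_add, smul_smul, div_eq_inv_mul]

theorem incenterPt_swap : incenterPt B A C = incenterPt A B C := by
  rw [incenterPt, incenterPt, dist_comm A C, dist_comm C B, dist_comm B A]
  module

theorem excenterPt_swap : excenterPt A C B = excenterPt A B C := by
  rw [excenterPt, excenterPt, dist_comm C B, dist_comm B A, dist_comm A C]
  module

theorem dist_excenterPt_first_sq (h : -dist B C + dist C A + dist A B ≠ 0) :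
    dist (excenterPt A B C) A ^ 2 =
      dist C A * dist A B * (dist B C + dist C A + dist A B) /
        (-dist B C + dist C A + dist A B) := by
  rw [excenterPt_eq]
  conv_lhs => enter [1, 2]; rw [show A = (1 : ℝ) • A + (0 : ℝ) • B + (0 : ℝ) • C by module]
  rw [dist_smul_add_smul_add_smul_sq A B C (by field_simp) (by norm_num)]
  field_simp
  ring

theorem dist_excenterPt_second_sq (h : -dist B C + dist C A + dist A B ≠ 0) :
    dist (excenterPt A B C) B ^ 2 =
      dist B C * dist A B * (dist B C + dist C A - dist A B) /
        (-dist B C + dist C A + dist A B) := by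
  rw [excenterPt_eq]
  conv_lhs => enter [1, 2]; rw [show B = (0 : ℝ) • A + (1 : ℝ) • B + (0 : ℝ) • C by module]
  rw [dist_smul_add_smul_add_smul_sq A B C (by field_simp) (by norm_num)]
  field_simp
  ring

theorem dist_excenterPt_incenterPt_sq (h : -dist B C + dist C A + dist A B ≠ 0)
    (h' : dist B C + dist C A + dist A B ≠ 0) :
    dist (excenterPt A B C) (incenterPt A B C) ^ 2 =
      4 * dist B C ^ 2 * dist C A * dist A B /
        ((-dist B C + dist C A + dist A B) * (dist B C + dist C A + dist A B)) := by
  rw [excenterPt_eq, incenterPt_eq, dist_smul_add_smul_add_smul_sq A B C (by field_simp)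
    (by field_simp)]
  field_simp
  ring

theorem dist_excenterPt_excenterPt_sq (h : -dist B C + dist C A + dist A B ≠ 0)
    (h' : dist B C + dist C A - dist A B ≠ 0) :
    dist (excenterPt A B C) (excenterPt C A B) ^ 2 =
      4 * dist B C * dist C A ^ 2 * dist A B /
        ((-dist B C + dist C A + dist A B) * (dist B C + dist C A - dist A B)) := by
  have hC : excenterPt C A B =
      (dist B C / (dist B C + dist C A - dist A B)) • A +
        (dist C A / (dist B C + dist C A - dist A B)) • B +
        (-dist A B / (dist B C + dist C A - dist A B)) • C := by
    rw [excenterPt_eq,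
      show -dist A B + dist B C + dist C A = dist B C + dist C A - dist A B by ring]
    abel
  rw [excenterPt_eq, hC,
    dist_smul_add_smul_add_smul_sq A B C (by field_simp) (by field_simp; ring)]
  field_simp
  ring

end Triangle

theorem dist_excenterPt_ratio {A B C : EuclideanSpace ℝ (Fin 2)}
    (h : ¬ Collinear ℝ ({A, B, C} : Set (EuclideanSpace ℝ (Fin 2)))) :
    dist (excenterPt A B C) (incenterPt A B C) / dist (excenterPt A B C) (excenterPt C A B) =
      dist (excenterPt A B C) B / dist (excenterPt A B C) A := by
  have ha := dist_lt_dist_add_dist_of_not_collinear_s11 h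
  have hb := dist_lt_dist_add_dist_of_not_collinear_s11 (A := B) (B := C) (C := A)
    (by rwa [Set.pair_comm, Set.insert_comm])
  have hc := dist_lt_dist_add_dist_of_not_collinear_s11 (A := C) (B := A) (C := B)
    (by rwa [Set.insert_comm, Set.pair_comm])
  rw [← sq_eq_sq₀ (by positivity) (by positivity), div_pow, div_pow,
    dist_excenterPt_incenterPt_sq _ _ _ (by linarith) (by linarith),
    dist_excenterPt_excenterPt_sq _ _ _ (by linarith) (by linarith),
    dist_excenterPt_first_sq _ _ _ (by linarith), dist_excenterPt_second_sq _ _ _ (by linarith)]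
  have hBC : 0 < dist B C := by linarith
  have hCA : 0 < dist C A := by linarith
  have hAB : 0 < dist A B := by linarith
  field_simp

/-- The two distance-ratio identities
`|E_A I|/|E_A E_C| = |E_A B|/|E_A A|` and `|E_B E_C|/|E_B I| = |E_B B|/|E_B A|`. -/
theorem dist_ratio_identities (A B C : EuclideanSpace ℝ (Fin 2))
    (h : AffineIndependent ℝ ![A, B, C])
    (I : EuclideanSpace ℝ (Fin 2)) (hI : I = incenterPt A B C)
    (EA : EuclideanSpace ℝ (Fin 2)) (hEA : EA = excenterPt A B C)
    (EB : EuclideanSpace ℝ (Fin 2)) (hEB : EB = excenterPt B C A)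
    (EC : EuclideanSpace ℝ (Fin 2)) (hEC : EC = excenterPt C A B) :
    dist EA I / dist EA EC = dist EA B / dist EA A ∧
    dist EB EC / dist EB I = dist EB B / dist EB A := by
  subst hI hEA hEB hEC
  have hABC := affineIndependent_iff_not_collinear_set.mp h
  refine ⟨dist_excenterPt_ratio hABC, ?_⟩
  have hBAC := dist_excenterPt_ratio (A := B) (B := A) (C := C) (by rwa [Set.insert_comm])
  rw [excenterPt_swap, incenterPt_swap, excenterPt_swap C] at hBAC
  rw [← inv_div, hBAC, inv_div]
end
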